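/- Let p < q < r be primes with p·q dividing r − 1, and let t be an integer whose residue class modulo r is a unit of multiplicative order p·q. Then the group G(pq, r, t) has exactly p·q + (r − 1)/(p·q) conjugacy classes. -/

import Mathlib

/-- The units of `ZMod e` act on `Multiplicative (ZMod e)` as (multiplicative) automorphisms. -/
def unitsMulAut (e : ℕ) : (ZMod e)ˣ →* MulAut (Multiplicative (ZMod e)) where
  toFun u := AddEquiv.toMultiplicative (DistribMulAction.toAddAut (ZMod e)ˣ (ZMod e) u)
  map_one' := by
    ext x
    show Multiplicative.ofAdd ((1 : (ZMod e)ˣ) • x.toAdd) = x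
    simp
  map_mul' u v := by
    ext x
    show Multiplicative.ofAdd (((u * v) : (ZMod e)ˣ) • x.toAdd)
      = Multiplicative.ofAdd (u • v • x.toAdd)
    rw [mul_smul]

/-- The homomorphism `Multiplicative (ZMod d) →* (ZMod e)ˣ` sending `a` to `u ^ a`,
well defined since `u ^ d = 1`. -/
def zmodPowHom {e : ℕ} (d : ℕ) (u : (ZMod e)ˣ) (hu : u ^ d = 1) :
    Multiplicative (ZMod d) →* (ZMod e)ˣ :=
  AddMonoidHom.toMultiplicativeLeft
    (ZMod.lift d ⟨zmultiplesHom (Additive (ZMod e)ˣ) (Additive.ofMul u), by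
      simpa [zmultiplesHom, ← ofMul_pow] using congrArg Additive.ofMul hu⟩)

/-- The group `G(d,e,t)` where `u` is the unit of `ZMod e` given by `t` :
the semidirect product `(ℤ/eℤ) ⋊ (ℤ/dℤ)` in which `a ∈ ℤ/dℤ` acts on `ℤ/eℤ` by
`b ↦ t ^ a * b`.  This is the group with presentation
`⟨x, y | x ^ d = 1, y ^ e = 1, x⁻¹ * y * x = y ^ t⟩`, the element `(b, a)`
corresponding to `x ^ a * y ^ b`. -/
abbrev Gdet (d e : ℕ) (u : (ZMod e)ˣ) (hu : u ^ d = 1) : Type :=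
  SemidirectProduct (Multiplicative (ZMod e)) (Multiplicative (ZMod d))
    ((unitsMulAut e).comp (zmodPowHom d u hu))

/-!
The number of commuting pairs of a finite group `G` is `k(G) · |G|`. Writing elements of
`G(d, r, t)` as pairs `(b, a)` with `b ∈ ℤ/r` and `a ∈ ℤ/d`, the elements `(b₁, a₁)` and
`(b₂, a₂)` commute iff `(t ^ a₁ - 1) b₂ = (t ^ a₂ - 1) b₁`. As `t` has order `d`, this
linear equation over the field `ℤ/r` is trivial only for `a₁ = a₂ = 0` and has `r` solutions
otherwise. So there are `r² + (d² - 1) r` commuting pairs, and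
`k(G) = (r + d² - 1) / d = d + (r - 1) / d` since `d ∣ r - 1`.
-/

theorem zmodPowHom_ofAdd_intCast {d e : ℕ} (u : (ZMod e)ˣ) (hu : u ^ d = 1) (x : ℤ) :
    zmodPowHom d u hu (Multiplicative.ofAdd (x : ZMod d)) = u ^ x := by
  change Additive.toMul (ZMod.lift d _ (x : ZMod d)) = u ^ x
  simp [ZMod.lift_coe, zmultiplesHom]

theorem zmodPowHom_ofAdd_eq_one_iff {d e : ℕ} (u : (ZMod e)ˣ) (hu : u ^ d = 1)
    (hord : orderOf u = d) (a : ZMod d) :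
    zmodPowHom d u hu (Multiplicative.ofAdd a) = 1 ↔ a = 0 := by
  obtain ⟨x, rfl⟩ := ZMod.intCast_surjective a
  rw [zmodPowHom_ofAdd_intCast, ← orderOf_dvd_iff_zpow_eq_one, hord,
    ZMod.intCast_zmod_eq_zero_iff_dvd]

section LinearEquation

variable {F : Type*} [Field F]

theorem card_mul_snd_eq_mul_fst_of_ne_zero {a : F} (ha : a ≠ 0) (b : F) :
    Nat.card {v : F × F // a * v.2 = b * v.1} = Nat.card F :=
  Nat.card_congr
    { toFun := fun v => v.1.1
      invFun := fun x => ⟨(x, a⁻¹ * (b * x)), mul_inv_cancel_left₀ ha _⟩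
      left_inv := fun ⟨(x, y), h⟩ => by
        ext
        · rfl
        · exact ((eq_inv_mul_iff_mul_eq₀ ha).2 h).symm
      right_inv := fun _ => rfl }

theorem card_mul_snd_eq_mul_fst [DecidableEq F] (a b : F) :
    Nat.card {v : F × F // a * v.2 = b * v.1}
      = if a = 0 ∧ b = 0 then Nat.card F ^ 2 else Nat.card F := by
  split_ifs with h
  · obtain ⟨rfl, rfl⟩ := h
    rw [Nat.card_congr (Equiv.subtypeUnivEquiv fun _ => by simp), Nat.card_prod, sq]
  · by_cases ha : a = 0
    · have hb : b ≠ 0 := fun hb => h ⟨ha, hb⟩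
      rw [Nat.card_congr (Equiv.subtypeEquiv (p := fun v : F × F => a * v.2 = b * v.1)
          (q := fun v => b * v.2 = a * v.1)
          (Equiv.prodComm F F) fun _ => eq_comm),
        card_mul_snd_eq_mul_fst_of_ne_zero hb]
    · exact card_mul_snd_eq_mul_fst_of_ne_zero ha b

end LinearEquation

namespace Gdet

variable {d r : ℕ} {u : (ZMod r)ˣ} {hu : u ^ d = 1}

variable (u hu) in
def powSubOne (a : ZMod d) : ZMod r :=
  (zmodPowHom d u hu (Multiplicative.ofAdd a) : ZMod r) - 1

theorem powSubOne_eq_zero_iff (hord : orderOf u = d) (a : ZMod d) :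
    powSubOne u hu a = 0 ↔ a = 0 := by
  rw [powSubOne, sub_eq_zero, Units.val_eq_one, zmodPowHom_ofAdd_eq_one_iff u hu hord]

theorem commute_iff (g h : Gdet d r u hu) :
    Commute g h ↔
      powSubOne u hu g.right.toAdd * h.left.toAdd =
        powSubOne u hu h.right.toAdd * g.left.toAdd := by
  have hright : (g * h).right = (h * g).right := mul_comm g.right h.right
  rw [Commute, SemiconjBy, SemidirectProduct.ext_iff, and_iff_left hright,
    ← Multiplicative.toAdd.injective.eq_iff]
  change g.left.toAdd + _ * h.left.toAdd = h.left.toAdd + _ * g.left.toAdd ↔ _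
  rw [powSubOne, powSubOne, ofAdd_toAdd, ofAdd_toAdd]
  constructor <;> intro H <;> linear_combination H

variable (u hu) in
def commutingPairsEquiv :
    {x : Gdet d r u hu × Gdet d r u hu // Commute x.1 x.2} ≃
      Σ a : ZMod d × ZMod d,
        {b : ZMod r × ZMod r // powSubOne u hu a.1 * b.2 = powSubOne u hu a.2 * b.1} where
  toFun x := ⟨(x.1.1.right.toAdd, x.1.2.right.toAdd), (x.1.1.left.toAdd, x.1.2.left.toAdd),
    (commute_iff _ _).1 x.2⟩
  invFun y := ⟨(⟨.ofAdd y.2.1.1, .ofAdd y.1.1⟩, ⟨.ofAdd y.2.1.2, .ofAdd y.1.2⟩),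
    (commute_iff _ _).2 y.2.2⟩
  left_inv _ := rfl
  right_inv _ := rfl

theorem card_commutingPairs [NeZero d] (hr : r.Prime) (hord : orderOf u = d) :
    Nat.card {x : Gdet d r u hu × Gdet d r u hu // Commute x.1 x.2} =
      r ^ 2 + (d ^ 2 - 1) * r := by
  have : Fact r.Prime := ⟨hr⟩
  classical
  have hfiber (a : ZMod d × ZMod d) :
      Nat.card {b : ZMod r × ZMod r // powSubOne u hu a.1 * b.2 = powSubOne u hu a.2 * b.1}
        = if a = 0 then r ^ 2 else r := by
    simp only [card_mul_snd_eq_mul_fst, powSubOne_eq_zero_iff hord, Prod.ext_iff, Nat.card_zmod,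
      Prod.fst_zero, Prod.snd_zero]
  rw [Nat.card_congr (commutingPairsEquiv u hu), Nat.card_sigma,
    Fintype.sum_eq_add_sum_compl 0]
  simp only [hfiber, if_pos]
  rw [Finset.sum_congr rfl fun a ha => if_neg (by simpa using ha), Finset.sum_const,
    Finset.card_compl, Finset.card_singleton, Fintype.card_prod, ZMod.card, smul_eq_mul, ← sq]

theorem card : Nat.card (Gdet d r u hu) = r * d := by
  rw [Nat.card_congr SemidirectProduct.equivProd, Nat.card_prod,
    Nat.card_congr (Multiplicative.toAdd (α := ZMod r)),
    Nat.card_congr (Multiplicative.toAdd (α := ZMod d)), Nat.card_zmod, Nat.card_zmod]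

theorem card_conjClasses (hr : r.Prime) (hord : orderOf u = d) :
    Nat.card (ConjClasses (Gdet d r u hu)) = d + (r - 1) / d := by
  have : Fact r.Prime := ⟨hr⟩
  have hd : 0 < d := hord ▸ orderOf_pos u
  have : NeZero d := ⟨hd.ne'⟩
  obtain ⟨m, hm⟩ : d ∣ r - 1 := hord ▸ ZMod.orderOf_units_dvd_card_sub_one u
  have hcount := card_comm_eq_card_conjClasses_mul_card (Gdet d r u hu)
  rw [card_commutingPairs hr hord, card] at hcount
  have hfactor : r ^ 2 + (d ^ 2 - 1) * r = (d + m) * (r * d) := by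
    obtain rfl : r = d * m + 1 := by have := hr.one_lt; omega
    zify [Nat.one_le_pow 2 d hd]
    ring
  rw [hm, Nat.mul_div_cancel_left m hd]
  exact Nat.eq_of_mul_eq_mul_right (Nat.mul_pos hr.pos hd) (hcount.symm.trans hfactor)

end Gdet

theorem classNumber_pqr_d_eq_pq (p q r : ℕ) (hr : r.Prime)
    (u : (ZMod r)ˣ) (hord : orderOf u = p * q) :
    Nat.card (ConjClasses
        (Gdet (p * q) r u (by rw [← hord]; exact pow_orderOf_eq_one u)))
      = p * q + (r - 1) / (p * q) :=
  Gdet.card_conjClasses hr hord
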